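/- For x ∈ Affine with c·x = z (z < c·e) and 0 < ε < 1: (c·π(x) − z*)/(c·e − z*) ≤ ε if and only if λ*_{min,z} − λ_min(x) ≤ (ε/(1−ε))·((c·e − z)/(c·e − z*)). -/

import Mathlib

/-!
If `x ∈ Affine_z` and `x - l • e ∈ K` with `l < 1`, then `e + (1 - l)⁻¹ • (x - e)` is feasible,
so `l ≤ (z - z*)/(c·e - z*)`; `l ≥ 1` is impossible, since then the whole ray from `e` through `x`
is feasible and `c` is unbounded below on it. The point of `Affine_z` on the segment from `e` to
an optimal solution attains the bound, so `λ*_{min,z} = (z - z*)/(c·e - z*)`. With this value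
both inequalities of the theorem reduce to `(1 - ε)(1 - λ_min(x))(c·e - z*) ≤ c·e - z`.
-/

open RealInnerProductSpace Filter Topology

section Cone

variable {E : Type*} [AddCommGroup E] [Module ℝ E] {K : Set E}

theorem add_mem_of_convex_of_smul_mem (hconv : Convex ℝ K)
    (hcone : ∀ t : ℝ, 0 < t → ∀ x ∈ K, t • x ∈ K) {x y : E} (hx : x ∈ K) (hy : y ∈ K) :
    x + y ∈ K := by
  have := hcone 2 two_pos _ (hconv hx hy (by norm_num : (0 : ℝ) ≤ 1 / 2)
    (by norm_num : (0 : ℝ) ≤ 1 / 2) (by norm_num))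
  convert this using 1
  module

theorem lineMap_mem_of_sub_smul_mem (hconv : Convex ℝ K)
    (hcone : ∀ t : ℝ, 0 < t → ∀ x ∈ K, t • x ∈ K) {e y : E} {l t : ℝ} (he : e ∈ K)
    (hy : y - l • e ∈ K) (ht : 0 < t) (htl : t * (1 - l) ≤ 1) :
    AffineMap.lineMap e y t ∈ K := by
  have hsplit : AffineMap.lineMap e y t = t • (y - l • e) + (1 - t * (1 - l)) • e := by
    rw [AffineMap.lineMap_apply_module']
    module
  rcases htl.eq_or_lt with htl | htl
  · rw [hsplit, htl, sub_self, zero_smul, add_zero]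
    exact hcone t ht _ hy
  · rw [hsplit]
    exact add_mem_of_convex_of_smul_mem hconv hcone (hcone t ht _ hy)
      (hcone _ (sub_pos.2 htl) _ he)

variable [TopologicalSpace E] [IsTopologicalAddGroup E] [ContinuousSMul ℝ E]

theorem eventually_smul_add_mem_of_mem_interior {e : E} (he : e ∈ interior K) (v : E) :
    ∀ᶠ s : ℝ in 𝓝 0, s • v + e ∈ K := by
  have : Tendsto (fun s : ℝ => s • v + e) (𝓝 0) (𝓝 e) := by
    simpa using ((tendsto_id (x := 𝓝 (0 : ℝ))).smul_const v).add_const e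
  exact this.eventually (mem_interior_iff_mem_nhds.1 he)

theorem exists_sub_smul_mem_of_mem_interior (hcone : ∀ t : ℝ, 0 < t → ∀ x ∈ K, t • x ∈ K)
    {e : E} (he : e ∈ interior K) (y : E) : ∃ l : ℝ, y - l • e ∈ K := by
  obtain ⟨s, hs, hpos⟩ := ((eventually_smul_add_mem_of_mem_interior he y).filter_mono
    nhdsWithin_le_nhds).and (self_mem_nhdsWithin (s := Set.Ioi (0 : ℝ))) |>.exists
  refine ⟨-s⁻¹, ?_⟩
  convert hcone s⁻¹ (inv_pos.2 hpos) _ hs using 1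
  rw [smul_add, smul_smul, inv_mul_cancel₀ (ne_of_gt hpos)]
  module

end Cone

section Program

variable {E : Type*} [NormedAddCommGroup E] [InnerProductSpace ℝ E]

theorem inner_lineMap (c e y : E) (t : ℝ) :
    ⟪c, AffineMap.lineMap e y t⟫ = ⟪c, e⟫ + t * (⟪c, y⟫ - ⟪c, e⟫) := by
  rw [AffineMap.lineMap_apply_module', inner_add_right, real_inner_smul_right, inner_sub_right]
  ring

variable {K : Set E} {S : AffineSubspace ℝ E} {c e : E} {zstar : ℝ}

theorem lt_inner_of_exists_inner_ne (hlow : ∀ y ∈ S, y ∈ K → zstar ≤ ⟪c, y⟫) (heS : e ∈ S)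
    (heK : e ∈ interior K) (hc : ∃ v ∈ S.direction, ⟪c, v⟫ ≠ 0) : zstar < ⟪c, e⟫ := by
  obtain ⟨v, hv, hcv⟩ := hc
  have hboth := (eventually_smul_add_mem_of_mem_interior heK v).and
    (eventually_smul_add_mem_of_mem_interior heK (-v))
  obtain ⟨s, ⟨hplus, hminus⟩, hs⟩ := ((hboth.filter_mono nhdsWithin_le_nhds).and
    (self_mem_nhdsWithin (s := Set.Ioi (0 : ℝ)))).exists
  have hplus' := hlow _ (S.vadd_mem_of_mem_direction (S.direction.smul_mem s hv) heS) hplus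
  have hminus' := hlow _ (S.vadd_mem_of_mem_direction (S.direction.smul_mem s
    (S.direction.neg_mem hv)) heS) hminus
  rw [vadd_eq_add, inner_add_right, real_inner_smul_right] at hplus' hminus'
  rw [inner_neg_right] at hminus'
  by_contra hge
  have hsv : s * ⟪c, v⟫ = 0 := by linarith
  exact hcv ((mul_eq_zero.1 hsv).resolve_left (ne_of_gt hs))

theorem mul_sub_le_of_sub_smul_mem (hconv : Convex ℝ K)
    (hcone : ∀ t : ℝ, 0 < t → ∀ x ∈ K, t • x ∈ K)
    (hlow : ∀ y ∈ S, y ∈ K → zstar ≤ ⟪c, y⟫) (heS : e ∈ S) (heK : e ∈ K)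
    {y : E} (hyS : y ∈ S) (hy : ⟪c, y⟫ < ⟪c, e⟫) {l : ℝ} (hl : y - l • e ∈ K) :
    l * (⟪c, e⟫ - zstar) ≤ ⟪c, y⟫ - zstar := by
  have hray : ∀ t : ℝ, 0 < t → t * (1 - l) ≤ 1 → zstar + t * (⟪c, e⟫ - ⟪c, y⟫) ≤ ⟪c, e⟫ :=
    fun t ht htl => by
      have := inner_lineMap c e y t ▸ hlow _ (AffineMap.lineMap_mem t heS hyS)
        (lineMap_mem_of_sub_smul_mem hconv hcone heK hl ht htl)
      linarith
  rcases lt_or_ge l 1 with hl1 | hl1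
  · have hμ : 0 < 1 - l := sub_pos.2 hl1
    have := hray (1 - l)⁻¹ (inv_pos.2 hμ) (inv_mul_cancel₀ hμ.ne').le
    rw [← div_eq_inv_mul, ← le_sub_iff_add_le', div_le_iff₀ hμ] at this
    linarith
  · have hze : zstar ≤ ⟪c, e⟫ := hlow e heS heK
    -- at this `t` the ray from `e` through `y` reaches the value `zstar - 1`
    have hd : 0 < ⟪c, e⟫ - ⟪c, y⟫ := sub_pos.2 hy
    have := hray ((⟪c, e⟫ - zstar + 1) / (⟪c, e⟫ - ⟪c, y⟫)) (by positivity)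
      (by nlinarith [div_pos (by linarith : 0 < ⟪c, e⟫ - zstar + 1) hd])
    rw [div_mul_cancel₀ _ hd.ne'] at this
    linarith

noncomputable def lambdaMin (K : Set E) (e y : E) : ℝ := sSup {l : ℝ | y - l • e ∈ K}

theorem le_div_of_sub_smul_mem (hconv : Convex ℝ K)
    (hcone : ∀ t : ℝ, 0 < t → ∀ x ∈ K, t • x ∈ K)
    (hlow : ∀ y ∈ S, y ∈ K → zstar ≤ ⟪c, y⟫) (heS : e ∈ S) (heK : e ∈ K)
    (hze : zstar < ⟪c, e⟫) {y : E} (hyS : y ∈ S) (hy : ⟪c, y⟫ < ⟪c, e⟫) {l : ℝ}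
    (hl : y - l • e ∈ K) : l ≤ (⟪c, y⟫ - zstar) / (⟪c, e⟫ - zstar) :=
  (le_div_iff₀ (sub_pos.2 hze)).2 (mul_sub_le_of_sub_smul_mem hconv hcone hlow heS heK hyS hy hl)

theorem lambdaMin_le_div (hconv : Convex ℝ K)
    (hcone : ∀ t : ℝ, 0 < t → ∀ x ∈ K, t • x ∈ K)
    (hlow : ∀ y ∈ S, y ∈ K → zstar ≤ ⟪c, y⟫) (heS : e ∈ S) (heK : e ∈ interior K)
    (hze : zstar < ⟪c, e⟫) {y : E} (hyS : y ∈ S) (hy : ⟪c, y⟫ < ⟪c, e⟫) :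
    lambdaMin K e y ≤ (⟪c, y⟫ - zstar) / (⟪c, e⟫ - zstar) :=
  csSup_le (exists_sub_smul_mem_of_mem_interior hcone heK y) fun _ hl =>
    le_div_of_sub_smul_mem hconv hcone hlow heS (interior_subset heK) hze hyS hy hl

theorem sSup_lambdaMin_eq (hconv : Convex ℝ K)
    (hcone : ∀ t : ℝ, 0 < t → ∀ x ∈ K, t • x ∈ K) {xopt : E} (hoS : xopt ∈ S) (hoK : xopt ∈ K)
    (hopt : ∀ y ∈ S, y ∈ K → ⟪c, xopt⟫ ≤ ⟪c, y⟫) (heS : e ∈ S) (heK : e ∈ interior K)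
    (hze : ⟪c, xopt⟫ < ⟪c, e⟫) {z : ℝ} (hz : z < ⟪c, e⟫) :
    sSup {r : ℝ | ∃ x, x ∈ S ∧ ⟪c, x⟫ = z ∧ r = lambdaMin K e x} =
      (z - ⟪c, xopt⟫) / (⟪c, e⟫ - ⟪c, xopt⟫) := by
  have hA : 0 < ⟪c, e⟫ - ⟪c, xopt⟫ := sub_pos.2 hze
  set t := (⟪c, e⟫ - z) / (⟪c, e⟫ - ⟪c, xopt⟫) with ht
  set x₁ := AffineMap.lineMap e xopt t with hx₁
  have hx₁S : x₁ ∈ S := AffineMap.lineMap_mem t heS hoS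
  have hx₁z : ⟪c, x₁⟫ = z := by
    rw [inner_lineMap, ht]
    field_simp
    ring
  have hx₁K : x₁ - (1 - t) • e ∈ K := by
    convert hcone t (div_pos (sub_pos.2 hz) hA) _ hoK using 1
    rw [hx₁, AffineMap.lineMap_apply_module']
    module
  have hbdd : BddAbove {l : ℝ | x₁ - l • e ∈ K} := ⟨_, fun _ hl =>
    le_div_of_sub_smul_mem hconv hcone hopt heS (interior_subset heK) hze hx₁S (hx₁z ▸ hz) hl⟩
  refine IsGreatest.csSup_eq ⟨⟨x₁, hx₁S, hx₁z, le_antisymm ?_ ?_⟩, ?_⟩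
  · calc (z - ⟪c, xopt⟫) / (⟪c, e⟫ - ⟪c, xopt⟫) = 1 - t := by rw [ht]; field_simp; ring
      _ ≤ lambdaMin K e x₁ := le_csSup hbdd hx₁K
  · exact hx₁z ▸ lambdaMin_le_div hconv hcone hopt heS heK hze hx₁S (hx₁z ▸ hz)
  · rintro _ ⟨y, hyS, rfl, rfl⟩
    exact lambdaMin_le_div hconv hcone hopt heS heK hze hyS hz

end Program

theorem relativeError_le_iff {a z zs l ε : ℝ} (hA : zs < a) (hl : l < 1) (hε : ε < 1) :
    (a + (1 - l)⁻¹ * (z - a) - zs) / (a - zs) ≤ ε ↔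
      (z - zs) / (a - zs) - l ≤ ε / (1 - ε) * ((a - z) / (a - zs)) := by
  have hA' : 0 < a - zs := sub_pos.2 hA
  have hl' : 0 < 1 - l := sub_pos.2 hl
  have hε' : 0 < 1 - ε := sub_pos.2 hε
  have hlhs : ε - (a + (1 - l)⁻¹ * (z - a) - zs) / (a - zs) =
      (a - z - (1 - ε) * (1 - l) * (a - zs)) / ((1 - l) * (a - zs)) := by
    field_simp
    ring
  have hrhs : ε / (1 - ε) * ((a - z) / (a - zs)) - ((z - zs) / (a - zs) - l) =
      (a - z - (1 - ε) * (1 - l) * (a - zs)) / ((1 - ε) * (a - zs)) := by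
    field_simp
    ring
  rw [← sub_nonneg, hlhs, ← sub_nonneg (b := _ - l), hrhs, le_div_iff₀ (by positivity),
    le_div_iff₀ (by positivity), zero_mul, zero_mul]

theorem relative_error_iff_general
    {E : Type*} [NormedAddCommGroup E] [InnerProductSpace ℝ E]
    (K : Set E) (hKconv : Convex ℝ K)
    (hKcone : ∀ t : ℝ, 0 < t → ∀ x ∈ K, t • x ∈ K)
    (S : AffineSubspace ℝ E) (c : E)
    (hc : ∃ v ∈ S.direction, ⟪c, v⟫ ≠ 0)
    (e : E) (heS : e ∈ S) (heK : e ∈ interior K)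
    (lamMin : E → ℝ)
    (hlam : ∀ x, lamMin x = sSup {l : ℝ | x - l • e ∈ K})
    (π : E → E)
    (hπ : ∀ x, π x = e + (1 - lamMin x)⁻¹ • (x - e))
    (z zstar : ℝ) (hz : z < ⟪c, e⟫)
    (hzstar : ∃ x, (x ∈ S ∧ x ∈ K ∧ ∀ y, y ∈ S → y ∈ K → ⟪c, x⟫ ≤ ⟪c, y⟫) ∧
      ⟪c, x⟫ = zstar)
    (lamStar : ℝ)
    (hlamStar : lamStar = sSup {r : ℝ | ∃ x, x ∈ S ∧ ⟪c, x⟫ = z ∧ r = lamMin x})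
    (x : E) (hxS : x ∈ S) (hxz : ⟪c, x⟫ = z)
    (ε : ℝ) (hε1 : ε < 1) :
    (⟪c, π x⟫ - zstar) / (⟪c, e⟫ - zstar) ≤ ε ↔
      lamStar - lamMin x ≤ (ε / (1 - ε)) * ((⟪c, e⟫ - z) / (⟪c, e⟫ - zstar)) := by
  obtain ⟨xopt, ⟨hoS, hoK, hopt⟩, rfl⟩ := hzstar
  obtain rfl : lamMin = lambdaMin K e := funext hlam
  have hze := lt_inner_of_exists_inner_ne hopt heS heK hc
  have hlx : lambdaMin K e x < 1 :=
    (lambdaMin_le_div hKconv hKcone hopt heS heK hze hxS (hxz ▸ hz)).trans_lt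
      ((div_lt_one (sub_pos.2 hze)).2 (by linarith))
  have hπx : ⟪c, π x⟫ = ⟪c, e⟫ + (1 - lambdaMin K e x)⁻¹ * (z - ⟪c, e⟫) := by
    rw [hπ, inner_add_right, real_inner_smul_right, inner_sub_right, hxz]
  rw [hlamStar, sSup_lambdaMin_eq hKconv hKcone hoS hoK hopt heS heK hze hz, hπx]
  exact relativeError_le_iff hze hlx hε1

/-- Proposition 2.5: for `x ∈ Affine_z` (`z < c·e`) and `0 < ε < 1`,
`(c·π(x) − z*)/(c·e − z*) ≤ ε` iff
`λ*_{min,z} − λ_min(x) ≤ (ε/(1−ε))·((c·e − z)/(c·e − z*))`. -/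
theorem relative_error_iff
    {E : Type*} [NormedAddCommGroup E] [InnerProductSpace ℝ E] [FiniteDimensional ℝ E]
    (K : Set E) (hKclosed : IsClosed K) (hKconv : Convex ℝ K)
    (hKcone : ∀ t : ℝ, 0 < t → ∀ x ∈ K, t • x ∈ K)
    (hKpointed : ∀ x, x ∈ K → -x ∈ K → x = 0)
    (hKproper : K ≠ Set.univ)
    (S : AffineSubspace ℝ E) (c : E)
    (hc : ∃ v ∈ S.direction, ⟪c, v⟫ ≠ 0)
    (e : E) (heS : e ∈ S) (heK : e ∈ interior K)
    (lamMin : E → ℝ)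
    (hlam : ∀ x, lamMin x = sSup {l : ℝ | x - l • e ∈ K})
    (π : E → E)
    (hπ : ∀ x, π x = e + (1 - lamMin x)⁻¹ • (x - e))
    (z zstar : ℝ) (hz : z < ⟪c, e⟫)
    (hzstar : ∃ x, (x ∈ S ∧ x ∈ K ∧ ∀ y, y ∈ S → y ∈ K → ⟪c, x⟫ ≤ ⟪c, y⟫) ∧
      ⟪c, x⟫ = zstar)
    (lamStar : ℝ)
    (hlamStar : lamStar = sSup {r : ℝ | ∃ x, x ∈ S ∧ ⟪c, x⟫ = z ∧ r = lamMin x})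
    (x : E) (hxS : x ∈ S) (hxz : ⟪c, x⟫ = z)
    (ε : ℝ) (hε0 : 0 < ε) (hε1 : ε < 1) :
    (⟪c, π x⟫ - zstar) / (⟪c, e⟫ - zstar) ≤ ε ↔
      lamStar - lamMin x ≤ (ε / (1 - ε)) * ((⟪c, e⟫ - z) / (⟪c, e⟫ - zstar)) :=
  relative_error_iff_general K hKconv hKcone S c hc e heS heK lamMin hlam π hπ z zstar hz hzstar
    lamStar hlamStar x hxS hxz ε hε1
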